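/- Let U = U_k V_k ⋯ U_1 V_1 U_0 be a product of unitaries on ((ℂ²)^{⊗n}) ⊗ ((ℂ²)^{⊗m}), where each U_i is incoherent (with respect to the computational basis of all n+m qubits) and each V_i is a generalized controlled-Hadamard, and let γ be a unit vector in (ℂ²)^{⊗m}. If Tr₂(U (ρ ⊗ |γ⟩⟨γ|) U†) = H^{⊗n} ρ H^{⊗n} for every quantum state ρ on (ℂ²)^{⊗n}, then n ≤ k. In particular, k Hadamard gates, incoherent unitaries, classical control and an arbitrary ancilla state cannot exactly and deterministically implement n > k Hadamard gates. -/

import Mathlib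

open Matrix Complex
open scoped Kronecker Classical ComplexOrder

noncomputable section

/-- A matrix is *incoherent* (w.r.t. the computational basis) if it has the form
`Σ_x e^{iθ_x} |π(x)⟩⟨x|` for a permutation `π` and real phases `θ`. -/
def IsIncoherent {d : Type*} [Fintype d] [DecidableEq d] (U : Matrix d d ℂ) : Prop :=
  ∃ (π : Equiv.Perm d) (θ : d → ℝ),
    U = Matrix.of fun i j => if i = π j then Complex.exp ((θ j : ℂ) * Complex.I) else 0

/-- The dephasing map `Δ`, zeroing all off-diagonal entries. -/
def dephase {d : Type*} [DecidableEq d] (ρ : Matrix d d ℂ) : Matrix d d ℂ :=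
  Matrix.of fun i j => if i = j then ρ i j else 0

/-- Partial trace over the second tensor factor. -/
def ptrace2 {α β : Type*} [Fintype β] (A : Matrix (α × β) (α × β) ℂ) : Matrix α α ℂ :=
  Matrix.of fun i i' => ∑ j, A (i, j) (i', j)

/-- Partial trace over the first tensor factor. -/
def ptrace1 {α β : Type*} [Fintype α] (A : Matrix (α × β) (α × β) ℂ) : Matrix β β ℂ :=
  Matrix.of fun j j' => ∑ i, A (i, j) (i, j')

/-- A quantum state: positive semidefinite matrix of trace one. -/
def IsState {d : Type*} [Fintype d] (ρ : Matrix d d ℂ) : Prop :=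
  ρ.PosSemidef ∧ ρ.trace = 1

/-- The Choi matrix of a linear map between matrix algebras. -/
def choiMatrix {a b : Type*} [Fintype a] [DecidableEq a] [Fintype b]
    (E : Matrix a a ℂ →ₗ[ℂ] Matrix b b ℂ) : Matrix (a × b) (a × b) ℂ :=
  Matrix.of fun p q => E (Matrix.single p.1 q.1 1) p.2 q.2

/-- A quantum channel: completely positive (PSD Choi matrix) trace-preserving linear map. -/
def IsChannel {a b : Type*} [Fintype a] [DecidableEq a] [Fintype b] [DecidableEq b]
    (E : Matrix a a ℂ →ₗ[ℂ] Matrix b b ℂ) : Prop :=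
  (choiMatrix E).PosSemidef ∧ ∀ ρ, (E ρ).trace = ρ.trace

/-- The square root of a positive semidefinite matrix (Mathlib's former
`Matrix.PosSemidef.sqrt`, removed since; restated with its old definition). -/
def Matrix.PosSemidef.sqrt {d : Type*} [Fintype d] [DecidableEq d] {A : Matrix d d ℂ}
    (hA : A.PosSemidef) : Matrix d d ℂ :=
  hA.1.eigenvectorUnitary.1 * diagonal ((↑) ∘ Real.sqrt ∘ hA.1.eigenvalues) *
    (star hA.1.eigenvectorUnitary : Matrix d d ℂ)

/-- The trace norm `‖M‖₁ = Tr √(M†M)`. -/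
def traceNorm {d : Type*} [Fintype d] [DecidableEq d] (M : Matrix d d ℂ) : ℝ :=
  ((Matrix.posSemidef_conjTranspose_mul_self M).sqrt.trace).re

/-- The trace distance `D(ρ,σ) = ½‖ρ−σ‖₁`. -/
def traceDist {d : Type*} [Fintype d] [DecidableEq d] (ρ σ : Matrix d d ℂ) : ℝ :=
  traceNorm (ρ - σ) / 2

/-- The coherence rank of a vector: the number of nonzero coordinates. -/
def cohRank {d : Type*} [Fintype d] (ψ : d → ℂ) : ℕ :=
  (Finset.univ.filter fun x => ψ x ≠ 0).card

/-- The Hadamard gate. -/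
def Hmat : Matrix (Fin 2) (Fin 2) ℂ :=
  Matrix.of fun a b => (((Real.sqrt 2)⁻¹ : ℝ) : ℂ) * (if a = 1 ∧ b = 1 then -1 else 1)

/-- `H^{⊗n}`, the n-fold Kronecker power of the Hadamard gate. -/
def Hpow (n : ℕ) : Matrix (Fin n → Fin 2) (Fin n → Fin 2) ℂ :=
  Matrix.of fun i j => ∏ q, Hmat (i q) (j q)

/-- A generalized controlled-Hadamard on qubits indexed by `I`: for some target qubit `t`
and set `S` of configurations of the other qubits, apply `H` on qubit `t` controlled on the
other qubits being in `S`. -/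
def IsCtrlHadamard {I : Type*} [Fintype I] [DecidableEq I]
    (V : Matrix (I → Fin 2) (I → Fin 2) ℂ) : Prop :=
  ∃ (t : I) (S : Finset ({i : I // i ≠ t} → Fin 2)),
    V = Matrix.of fun a b =>
      if (fun i : {i : I // i ≠ t} => b i.1) ∈ S then
        (if ∀ i, i ≠ t → a i = b i then Hmat (a t) (b t) else 0)
      else (if a = b then (1 : ℂ) else 0)

/-- The alternating product `U_k * V_k * ⋯ * U_1 * V_1 * U_0`. -/
def altProd {X : Type*} [Monoid X] : (k : ℕ) → (Fin (k + 1) → X) → (Fin k → X) → X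
  | 0, Us, _ => Us 0
  | (k + 1), Us, Vs =>
      Us (Fin.last (k + 1)) * Vs (Fin.last k) *
        altProd k (fun i => Us i.castSucc) (fun i => Vs i.castSucc)

section AuxBasic
open Finset

lemma sqrt2_ne : ((Real.sqrt 2 : ℝ) : ℂ) ≠ 0 := by
  simp only [ne_eq, Complex.ofReal_eq_zero]
  positivity

lemma sqrt2_inv_ne : (((Real.sqrt 2)⁻¹ : ℝ) : ℂ) ≠ 0 := by
  simp only [ne_eq, Complex.ofReal_eq_zero, inv_eq_zero]
  positivity

lemma hmat_ne (a b : Fin 2) : Hmat a b ≠ 0 := by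
  unfold Hmat
  simp only [Matrix.of_apply]
  apply mul_ne_zero sqrt2_inv_ne
  split <;> norm_num

lemma hmat_conj (a b : Fin 2) : (starRingEnd ℂ) (Hmat a b) = Hmat a b := by
  unfold Hmat
  simp only [Matrix.of_apply]
  split <;> simp [_root_.map_mul, Complex.conj_ofReal]

lemma hmat_symm (a b : Fin 2) : Hmat a b = Hmat b a := by
  unfold Hmat
  simp only [Matrix.of_apply, and_comm]

lemma sqrt2_mul_self : ((Real.sqrt 2 : ℝ) : ℂ) * ((Real.sqrt 2 : ℝ) : ℂ) = 2 := by
  rw [← Complex.ofReal_mul, Real.mul_self_sqrt (by norm_num : (0:ℝ) ≤ 2)]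
  norm_num

lemma hmat_mul (x z : Fin 2) : ∑ y : Fin 2, Hmat x y * Hmat y z = if x = z then 1 else 0 := by
  rw [Fin.sum_univ_two]
  fin_cases x <;> fin_cases z <;>
    simp [Hmat, Matrix.of_apply] <;>
    field_simp <;>
    linear_combination -sqrt2_mul_self

end AuxBasic
section AuxHpow
open Finset

lemma hpow_mul_hpow (n : ℕ) : Hpow n * Hpow n = 1 := by
  ext i j
  rw [Matrix.mul_apply]
  simp only [Hpow, Matrix.of_apply]
  have h1 : ∀ x : Fin n → Fin 2, (∏ q, Hmat (i q) (x q)) * ∏ q, Hmat (x q) (j q)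
      = ∏ q, (Hmat (i q) (x q) * Hmat (x q) (j q)) := fun x => (Finset.prod_mul_distrib).symm
  rw [Finset.sum_congr rfl fun x _ => h1 x]
  have hps := Finset.prod_univ_sum (t := fun _ : Fin n => (univ : Finset (Fin 2)))
    (f := fun q y => Hmat (i q) y * Hmat y (j q))
  rw [Fintype.piFinset_univ] at hps
  rw [← hps]
  have h2 : ∀ q : Fin n, (∑ y : Fin 2, Hmat (i q) y * Hmat y (j q)) = if i q = j q then 1 else 0 :=
    fun q => hmat_mul _ _
  rw [Finset.prod_congr rfl fun q _ => h2 q]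
  by_cases h : i = j
  · subst h; simp [Matrix.one_apply]
  · obtain ⟨q, hq⟩ := Function.ne_iff.mp h
    rw [Finset.prod_eq_zero (Finset.mem_univ q) (by simp [hq])]
    simp [Matrix.one_apply, h]

lemma hpow_conjTranspose (n : ℕ) : (Hpow n)ᴴ = Hpow n := by
  ext i j
  simp only [Matrix.conjTranspose_apply, Hpow, Matrix.of_apply, star_def, map_prod]
  exact Finset.prod_congr rfl fun q _ => by rw [hmat_conj, hmat_symm]

lemma outer_conj {d : Type*} [Fintype d] (U : Matrix d d ℂ) (Φ : d → ℂ) :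
    U * (Matrix.of fun a b => Φ a * (starRingEnd ℂ) (Φ b)) * Uᴴ
      = Matrix.of fun a b => (U *ᵥ Φ) a * (starRingEnd ℂ) ((U *ᵥ Φ) b) := by
  ext a b
  simp only [Matrix.mul_apply, Matrix.of_apply, Matrix.conjTranspose_apply, Matrix.mulVec,
    dotProduct, map_sum, _root_.map_mul]
  rw [Finset.sum_mul_sum]
  simp only [Finset.sum_mul]
  rw [Finset.sum_comm]
  exact Finset.sum_congr rfl fun x _ => Finset.sum_congr rfl fun y _ => by
    simp only [RCLike.star_def]; ring

lemma rank_one_factor {A B : Type*} [Fintype A] [Fintype B]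
    (M : A → B → ℂ) (v : A → ℂ) (i₀ : A) (hi₀ : v i₀ ≠ 0)
    (h : ∀ i i', ∑ j, M i j * (starRingEnd ℂ) (M i' j) = v i * (starRingEnd ℂ) (v i')) :
    ∀ i j, M i j = v i * (M i₀ j / v i₀) := by
  intro i j
  set c : ℂ := v i / v i₀ with hc
  have key : M i j - c * M i₀ j = 0 := by
    have expand : ∑ j', (M i j' - c * M i₀ j') * (starRingEnd ℂ) (M i j' - c * M i₀ j')
        = (∑ j', M i j' * (starRingEnd ℂ) (M i j'))
          - (starRingEnd ℂ) c * (∑ j', M i j' * (starRingEnd ℂ) (M i₀ j'))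
          - c * (∑ j', M i₀ j' * (starRingEnd ℂ) (M i j'))
          + c * (starRingEnd ℂ) c * (∑ j', M i₀ j' * (starRingEnd ℂ) (M i₀ j')) := by
      simp only [Finset.mul_sum]
      rw [← Finset.sum_sub_distrib, ← Finset.sum_sub_distrib, ← Finset.sum_add_distrib]
      exact Finset.sum_congr rfl fun x _ => by simp only [map_sub, _root_.map_mul]; ring
    have hzero : ∑ j', (M i j' - c * M i₀ j') * (starRingEnd ℂ) (M i j' - c * M i₀ j') = 0 := by
      rw [expand, h i i, h i i₀, h i₀ i, h i₀ i₀]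
      have hi₀' : (starRingEnd ℂ) (v i₀) ≠ 0 := by simpa using hi₀
      rw [hc]
      field_simp
      ring
    have hreal : ∑ j', Complex.normSq (M i j' - c * M i₀ j') = 0 := by
      simp only [Complex.mul_conj] at hzero
      exact_mod_cast hzero
    have := (Finset.sum_eq_zero_iff_of_nonneg (fun x _ => Complex.normSq_nonneg _)).mp hreal
      j (Finset.mem_univ j)
    exact Complex.normSq_eq_zero.mp this
  have := sub_eq_zero.mp key
  rw [this, hc]
  ring

end AuxHpow
section AuxRank
open Finset

lemma cohRank_pos {d : Type*} [Fintype d] {ψ : d → ℂ} (h : ∃ x, ψ x ≠ 0) : 1 ≤ cohRank ψ := by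
  obtain ⟨x, hx⟩ := h
  exact Finset.card_pos.mpr ⟨x, Finset.mem_filter.mpr ⟨Finset.mem_univ x, hx⟩⟩

lemma cohRank_mulVec_incoherent {d : Type*} [Fintype d] [DecidableEq d]
    {U : Matrix d d ℂ} (hU : IsIncoherent U) (ψ : d → ℂ) :
    cohRank (U *ᵥ ψ) = cohRank ψ := by
  obtain ⟨π, θ, rfl⟩ := hU
  have happ : ∀ i, ((Matrix.of fun i j =>
      if i = π j then Complex.exp ((θ j : ℂ) * Complex.I) else 0) *ᵥ ψ) i
      = Complex.exp ((θ (π.symm i) : ℂ) * Complex.I) * ψ (π.symm i) := by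
    intro i
    simp only [Matrix.mulVec, dotProduct, Matrix.of_apply]
    rw [Finset.sum_eq_single (π.symm i)]
    · simp
    · intro j _ hj
      rw [if_neg, zero_mul]
      intro h
      exact hj (by rw [h, Equiv.symm_apply_apply])
    · simp
  unfold cohRank
  have hset : (Finset.univ.filter fun i => ((Matrix.of fun i j =>
      if i = π j then Complex.exp ((θ j : ℂ) * Complex.I) else 0) *ᵥ ψ) i ≠ 0)
      = (Finset.univ.filter fun i => ψ (π.symm i) ≠ 0) := by
    ext i
    simp [happ i, Complex.exp_ne_zero]
  rw [hset]
  apply Finset.card_bij' (fun i _ => π.symm i) (fun j _ => π j)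
  · intro i hi
    simp only [Finset.mem_filter, Finset.mem_univ, true_and] at hi ⊢
    exact hi
  · intro j hj
    simp only [Finset.mem_filter, Finset.mem_univ, true_and] at hj ⊢
    simpa using hj
  · intro i _; simp
  · intro j _; simp

lemma cohRank_mulVec_le_two {d : Type*} [Fintype d] [DecidableEq d] {V : Matrix d d ℂ}
    (hcol : ∀ b, (Finset.univ.filter fun a => V a b ≠ 0).card ≤ 2) (ψ : d → ℂ) :
    cohRank (V *ᵥ ψ) ≤ 2 * cohRank ψ := by
  unfold cohRank
  have hsub : (Finset.univ.filter fun a => (V *ᵥ ψ) a ≠ 0)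
      ⊆ (Finset.univ.filter fun b => ψ b ≠ 0).biUnion
          (fun b => Finset.univ.filter fun a => V a b ≠ 0) := by
    intro a ha
    simp only [Finset.mem_filter, Finset.mem_univ, true_and] at ha
    obtain ⟨b, _, hb⟩ := Finset.exists_ne_zero_of_sum_ne_zero ha
    refine Finset.mem_biUnion.mpr ⟨b, ?_, ?_⟩ <;>
      simp only [Finset.mem_filter, Finset.mem_univ, true_and]
    · exact right_ne_zero_of_mul hb
    · exact left_ne_zero_of_mul hb
  calc (Finset.univ.filter fun a => (V *ᵥ ψ) a ≠ 0).card
      ≤ ((Finset.univ.filter fun b => ψ b ≠ 0).biUnion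
          (fun b => Finset.univ.filter fun a => V a b ≠ 0)).card := Finset.card_le_card hsub
    _ ≤ ∑ b ∈ Finset.univ.filter fun b => ψ b ≠ 0,
          (Finset.univ.filter fun a => V a b ≠ 0).card := Finset.card_biUnion_le
    _ ≤ ∑ _b ∈ Finset.univ.filter fun b => ψ b ≠ 0, 2 :=
        Finset.sum_le_sum fun b _ => hcol b
    _ = 2 * (Finset.univ.filter fun b => ψ b ≠ 0).card := by
        rw [Finset.sum_const, smul_eq_mul, mul_comm]

lemma ctrlHad_col {I : Type*} [Fintype I] [DecidableEq I] {V : Matrix (I → Fin 2) (I → Fin 2) ℂ}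
    (hV : IsCtrlHadamard V) :
    ∀ b, (Finset.univ.filter fun a => V a b ≠ 0).card ≤ 2 := by
  obtain ⟨t, S, rfl⟩ := hV
  intro b
  refine le_trans (Finset.card_le_card_of_injOn (fun a => a t)
    (fun _ _ => Finset.mem_univ _) ?_) (by simp)
  intro a ha a' ha' hat
  simp only [Finset.coe_filter, Set.mem_setOf_eq, Finset.mem_univ, true_and,
    Matrix.of_apply, Finset.mem_coe, Finset.mem_filter] at ha ha'
  replace ha : _ ≠ (0 : ℂ) := (Finset.mem_filter.mp ha).2
  replace ha' : _ ≠ (0 : ℂ) := (Finset.mem_filter.mp ha').2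
  by_cases hS : (fun i : {i : I // i ≠ t} => b i.1) ∈ S
  · rw [if_pos hS] at ha ha'
    have h1 : ∀ i, i ≠ t → a i = b i := by
      by_contra hcon; exact ha (if_neg hcon)
    have h2 : ∀ i, i ≠ t → a' i = b i := by
      by_contra hcon; exact ha' (if_neg hcon)
    funext i
    by_cases hit : i = t
    · rw [hit]; exact hat
    · rw [h1 i hit, h2 i hit]
  · rw [if_neg hS] at ha ha'
    have h1 : a = b := by by_contra hcon; exact ha (by rw [if_neg hcon])
    have h2 : a' = b := by by_contra hcon; exact ha' (by rw [if_neg hcon])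
    rw [h1, h2]

end AuxRank
section AuxInvol
open Finset

lemma ctrlHad_invol {I : Type*} [Fintype I] [DecidableEq I] {V : Matrix (I → Fin 2) (I → Fin 2) ℂ}
    (hV : IsCtrlHadamard V) : V * V = 1 := by
  obtain ⟨t, S, rfl⟩ := hV
  set f : (I → Fin 2) → (I → Fin 2) → ℂ := fun a b =>
    if (fun i : {i : I // i ≠ t} => b i.1) ∈ S then
      (if ∀ i, i ≠ t → a i = b i then Hmat (a t) (b t) else 0)
    else (if a = b then (1 : ℂ) else 0) with hf
  show (Matrix.of f) * (Matrix.of f) = 1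
  ext a c
  rw [Matrix.mul_apply, Matrix.one_apply]
  simp only [Matrix.of_apply]
  by_cases hc : (fun i : {i : I // i ≠ t} => c i.1) ∈ S
  · -- controlled case
    have hfc : ∀ b, f b c = if ∀ i, i ≠ t → b i = c i then Hmat (b t) (c t) else 0 := by
      intro b; rw [hf]; simp only [if_pos hc]
    -- restrict the sum to the two updates of c at t
    set u : Fin 2 → (I → Fin 2) := fun y => Function.update c t y with hu
    have hne : u 0 ≠ u 1 := by
      intro h
      have := congrFun h t
      simp [hu, Function.update_self] at this
    have hsub : ({u 0, u 1} : Finset (I → Fin 2)) ⊆ univ := fun x _ => mem_univ x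
    have hzero : ∀ b ∈ univ, b ∉ ({u 0, u 1} : Finset (I → Fin 2)) → f a b * f b c = 0 := by
      intro b _ hb
      rw [hfc b]
      rw [if_neg, mul_zero]
      intro hQ
      apply hb
      have hbu : b = u (b t) := by
        funext i
        by_cases hit : i = t
        · subst hit; simp [hu, Function.update_self]
        · rw [hu]; simp only [Function.update_of_ne hit]; exact hQ i hit
      rw [Finset.mem_insert, Finset.mem_singleton]
      have hbt : ∀ y : Fin 2, y = 0 ∨ y = 1 := by decide
      rcases hbt (b t) with h0 | h1
      · exact Or.inl (by rw [hbu, h0])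
      · exact Or.inr (by rw [hbu, h1])
    rw [← Finset.sum_subset hsub hzero]
    have hut : ∀ y, u y t = y := fun y => Function.update_self t y c
    have huoff : ∀ y i, i ≠ t → u y i = c i := fun y i hit => Function.update_of_ne hit y c
    have hfu : ∀ y, f (u y) c = Hmat y (c t) := by
      intro y
      rw [hfc]
      rw [if_pos (fun i hit => huoff y i hit), hut]
    have hfau : ∀ y, f a (u y) = if ∀ i, i ≠ t → a i = c i then Hmat (a t) y else 0 := by
      intro y
      rw [hf]
      have hctrl : (fun i : {i : I // i ≠ t} => u y i.1) ∈ S := by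
        have : (fun i : {i : I // i ≠ t} => u y i.1) = (fun i : {i : I // i ≠ t} => c i.1) := by
          funext i; exact huoff y i.1 i.2
        rw [this]; exact hc
      simp only [if_pos hctrl, hut]
      congr 1
      · simp only [eq_iff_iff]
        constructor
        · intro h i hit; rw [← huoff y i hit]; exact h i hit
        · intro h i hit; rw [huoff y i hit]; exact h i hit
    rw [Finset.sum_pair hne]
    rw [hfu, hfu, hfau, hfau]
    by_cases hQ : ∀ i, i ≠ t → a i = c i
    · simp only [if_pos hQ]
      have := hmat_mul (a t) (c t)
      rw [Fin.sum_univ_two] at this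
      rw [this]
      by_cases hac : a = c
      · rw [if_pos hac, if_pos (by rw [hac])]
      · rw [if_neg hac, if_neg ?_]
        intro hat
        apply hac
        funext i
        by_cases hit : i = t
        · subst hit; exact hat
        · exact hQ i hit
    · simp only [if_neg hQ, zero_mul, add_zero, zero_add, mul_zero]
      rw [if_neg (fun hac => hQ (fun i _ => by rw [hac]))]
  · -- uncontrolled case
    have hfc : ∀ b, f b c = if b = c then 1 else 0 := by
      intro b; rw [hf]; simp only [if_neg hc]
    have : ∀ b ∈ univ, f a b * f b c = if b = c then f a b else 0 := by
      intro b _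
      rw [hfc b]
      split <;> simp
    rw [Finset.sum_congr rfl this, Finset.sum_ite_eq' univ c (f a), if_pos (mem_univ c)]
    rw [hf]
    simp only [if_neg hc]

end AuxInvol
section AuxChain
open Finset

lemma cohRank_mulVec_ge {I : Type*} [Fintype I] [DecidableEq I]
    {V : Matrix (I → Fin 2) (I → Fin 2) ℂ} (hV : IsCtrlHadamard V) (ψ : (I → Fin 2) → ℂ) :
    cohRank ψ ≤ 2 * cohRank (V *ᵥ ψ) := by
  have h1 := cohRank_mulVec_le_two (ctrlHad_col hV) (V *ᵥ ψ)
  rwa [Matrix.mulVec_mulVec, ctrlHad_invol hV, Matrix.one_mulVec] at h1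

lemma altProd_chain {I : Type*} [Fintype I] [DecidableEq I] :
    ∀ (k : ℕ) (Us : Fin (k+1) → Matrix (I → Fin 2) (I → Fin 2) ℂ)
      (Vs : Fin k → Matrix (I → Fin 2) (I → Fin 2) ℂ),
      (∀ i, IsIncoherent (Us i)) → (∀ i, IsCtrlHadamard (Vs i)) →
      ∀ ψ : (I → Fin 2) → ℂ,
        cohRank ((altProd k Us Vs) *ᵥ ψ) ≤ 2^k * cohRank ψ ∧
        cohRank ψ ≤ 2^k * cohRank ((altProd k Us Vs) *ᵥ ψ)
  | 0, Us, Vs, hUs, hVs, ψ => by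
      show cohRank ((Us 0) *ᵥ ψ) ≤ 2^0 * cohRank ψ ∧ cohRank ψ ≤ 2^0 * cohRank ((Us 0) *ᵥ ψ)
      rw [cohRank_mulVec_incoherent (hUs 0)]
      simp
  | (k+1), Us, Vs, hUs, hVs, ψ => by
      obtain ⟨IH1, IH2⟩ := altProd_chain k (fun i => Us i.castSucc) (fun i => Vs i.castSucc)
        (fun i => hUs i.castSucc) (fun i => hVs i.castSucc) ψ
      set P := altProd k (fun i => Us i.castSucc) (fun i => Vs i.castSucc) with hP
      have hv : altProd (k+1) Us Vs *ᵥ ψ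
          = Us (Fin.last (k+1)) *ᵥ (Vs (Fin.last k) *ᵥ (P *ᵥ ψ)) := by
        show (Us (Fin.last (k+1)) * Vs (Fin.last k) * P) *ᵥ ψ = _
        rw [Matrix.mulVec_mulVec, Matrix.mulVec_mulVec, mul_assoc]
      constructor
      · rw [hv, cohRank_mulVec_incoherent (hUs _)]
        calc cohRank (Vs (Fin.last k) *ᵥ (P *ᵥ ψ))
            ≤ 2 * cohRank (P *ᵥ ψ) := cohRank_mulVec_le_two (ctrlHad_col (hVs _)) _
          _ ≤ 2 * (2^k * cohRank ψ) := Nat.mul_le_mul_left 2 IH1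
          _ = 2^(k+1) * cohRank ψ := by ring
      · rw [hv, cohRank_mulVec_incoherent (hUs _)]
        calc cohRank ψ ≤ 2^k * cohRank (P *ᵥ ψ) := IH2
          _ ≤ 2^k * (2 * cohRank (Vs (Fin.last k) *ᵥ (P *ᵥ ψ))) :=
              Nat.mul_le_mul_left _ (cohRank_mulVec_ge (hVs _) _)
          _ = 2^(k+1) * cohRank (Vs (Fin.last k) *ᵥ (P *ᵥ ψ)) := by ring

lemma cohRank_prod {n m : ℕ} (ψ : (Fin n → Fin 2) → ℂ) (γ : (Fin m → Fin 2) → ℂ) :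
    cohRank (fun f : (Fin n ⊕ Fin m) → Fin 2 => ψ (f ∘ Sum.inl) * γ (f ∘ Sum.inr))
      = cohRank ψ * cohRank γ := by
  unfold cohRank
  rw [← Finset.card_product]
  apply Finset.card_bij' (fun f _ => (f ∘ Sum.inl, f ∘ Sum.inr))
    (fun p _ => Sum.elim p.1 p.2)
  · intro f hf
    simp only [Finset.mem_filter, Finset.mem_univ, true_and, Finset.mem_product] at hf ⊢
    exact ⟨left_ne_zero_of_mul hf, right_ne_zero_of_mul hf⟩
  · intro p hp
    simp only [Finset.mem_filter, Finset.mem_univ, true_and, Finset.mem_product] at hp ⊢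
    rw [Sum.elim_comp_inl, Sum.elim_comp_inr]
    exact mul_ne_zero hp.1 hp.2
  · intro f _
    funext x
    cases x <;> rfl
  · intro p _
    rw [Sum.elim_comp_inl, Sum.elim_comp_inr]

end AuxChain
section AuxVals
open Finset

lemma hmat_apply_zero (a : Fin 2) : Hmat a 0 = (((Real.sqrt 2)⁻¹ : ℝ) : ℂ) := by
  unfold Hmat
  simp only [Matrix.of_apply]
  rw [if_neg (fun h => by exact absurd h.2 (by decide)), mul_one]

lemma hpow_mulVec_e0 (n : ℕ) :
    Hpow n *ᵥ (fun x : Fin n → Fin 2 => if x = (fun _ => 0) then (1:ℂ) else 0)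
      = fun _ => (((Real.sqrt 2)⁻¹ : ℝ) : ℂ) ^ n := by
  funext i
  simp only [Matrix.mulVec, dotProduct, mul_ite, mul_one, mul_zero]
  rw [Finset.sum_ite_eq' Finset.univ (fun _ => 0) (fun x => Hpow n i x),
    if_pos (Finset.mem_univ _)]
  simp only [Hpow, Matrix.of_apply]
  rw [Finset.prod_congr rfl (fun q _ => hmat_apply_zero (i q))]
  rw [Finset.prod_const, Finset.card_univ, Fintype.card_fin]

lemma hpow_mulVec_w (n : ℕ) :
    Hpow n *ᵥ (fun _ : Fin n → Fin 2 => (((Real.sqrt 2)⁻¹ : ℝ) : ℂ) ^ n)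
      = fun x : Fin n → Fin 2 => if x = (fun _ => 0) then (1:ℂ) else 0 := by
  rw [← hpow_mulVec_e0, Matrix.mulVec_mulVec, hpow_mul_hpow, Matrix.one_mulVec]

lemma cohRank_single {d : Type*} [Fintype d] [DecidableEq d] (z : d) :
    cohRank (fun x => if x = z then (1:ℂ) else 0) = 1 := by
  unfold cohRank
  have : (Finset.univ.filter fun x => (if x = z then (1:ℂ) else 0) ≠ 0) = {z} := by
    ext x
    simp only [Finset.mem_filter, Finset.mem_univ, true_and, Finset.mem_singleton]
    split <;> simp_all
  rw [this, Finset.card_singleton]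

lemma cohRank_const {d : Type*} [Fintype d] {c : ℂ} (hc : c ≠ 0) :
    cohRank (fun _ : d => c) = Fintype.card d := by
  unfold cohRank
  rw [Finset.filter_true_of_mem (fun x _ => hc), Finset.card_univ]

end AuxVals
section AuxExtract
open Finset

lemma outer_state {d : Type*} [Fintype d] [DecidableEq d] (ψ : d → ℂ)
    (hψ : ∑ x, Complex.normSq (ψ x) = 1) :
    IsState (Matrix.of fun x y => ψ x * (starRingEnd ℂ) (ψ y)) := by
  refine ⟨Matrix.PosSemidef.of_dotProduct_mulVec_nonneg ?_ ?_, ?_⟩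
  · ext x y
    simp only [Matrix.conjTranspose_apply, Matrix.of_apply, star_def, _root_.map_mul,
      Complex.conj_conj]
    ring
  · intro x
    have hform : dotProduct (star x)
        ((Matrix.of fun x y => ψ x * (starRingEnd ℂ) (ψ y)) *ᵥ x)
        = star (∑ y, (starRingEnd ℂ) (ψ y) * x y) * (∑ y, (starRingEnd ℂ) (ψ y) * x y) := by
      simp only [dotProduct, Matrix.mulVec, Matrix.of_apply, star_def, map_sum,
        _root_.map_mul, Complex.conj_conj, Pi.star_apply]
      rw [Finset.sum_mul_sum]
      refine Finset.sum_congr rfl fun a _ => ?_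
      rw [Finset.mul_sum]
      exact Finset.sum_congr rfl fun b _ => by ring
    rw [hform]
    exact star_mul_self_nonneg _
  · simp only [Matrix.trace, Matrix.diag, Matrix.of_apply, Complex.mul_conj]
    exact_mod_cast hψ

lemma extract_lemma {n m : ℕ}
    (U : Matrix ((Fin n ⊕ Fin m) → Fin 2) ((Fin n ⊕ Fin m) → Fin 2) ℂ)
    (γ : (Fin m → Fin 2) → ℂ)
    (himpl : ∀ ρ : Matrix (Fin n → Fin 2) (Fin n → Fin 2) ℂ, IsState ρ →
      (Matrix.of fun i i' : Fin n → Fin 2 => ∑ j : Fin m → Fin 2,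
        (U * (Matrix.of fun a b : (Fin n ⊕ Fin m) → Fin 2 =>
            ρ (a ∘ Sum.inl) (b ∘ Sum.inl) *
              (γ (a ∘ Sum.inr) * (starRingEnd ℂ) (γ (b ∘ Sum.inr)))) * Uᴴ)
          (Sum.elim i j) (Sum.elim i' j)) = Hpow n * ρ * Hpow n)
    (ψ : (Fin n → Fin 2) → ℂ) (hψ : ∑ x, Complex.normSq (ψ x) = 1) :
    ∀ i i' : Fin n → Fin 2,
      ∑ j : Fin m → Fin 2,
        (U *ᵥ fun a => ψ (a ∘ Sum.inl) * γ (a ∘ Sum.inr)) (Sum.elim i j)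
          * (starRingEnd ℂ) ((U *ᵥ fun a => ψ (a ∘ Sum.inl) * γ (a ∘ Sum.inr)) (Sum.elim i' j))
        = (Hpow n *ᵥ ψ) i * (starRingEnd ℂ) ((Hpow n *ᵥ ψ) i') := by
  intro i i'
  set ρ : Matrix (Fin n → Fin 2) (Fin n → Fin 2) ℂ :=
    Matrix.of fun x y => ψ x * (starRingEnd ℂ) (ψ y) with hρ
  have h := himpl ρ (outer_state ψ hψ)
  have hinner : (Matrix.of fun a b : (Fin n ⊕ Fin m) → Fin 2 =>
      ρ (a ∘ Sum.inl) (b ∘ Sum.inl) *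
        (γ (a ∘ Sum.inr) * (starRingEnd ℂ) (γ (b ∘ Sum.inr))))
      = Matrix.of fun a b : (Fin n ⊕ Fin m) → Fin 2 =>
          (fun a => ψ (a ∘ Sum.inl) * γ (a ∘ Sum.inr)) a
            * (starRingEnd ℂ) ((fun a => ψ (a ∘ Sum.inl) * γ (a ∘ Sum.inr)) b) := by
    ext a b
    simp only [Matrix.of_apply, hρ, _root_.map_mul]
    ring
  rw [hinner, outer_conj] at h
  have hrhs : Hpow n * ρ * Hpow n
      = Matrix.of fun i i' => (Hpow n *ᵥ ψ) i * (starRingEnd ℂ) ((Hpow n *ᵥ ψ) i') := by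
    conv_lhs => rw [show Hpow n * ρ * Hpow n = Hpow n * ρ * (Hpow n)ᴴ by
      rw [hpow_conjTranspose]]
    rw [hρ]
    exact outer_conj _ _
  rw [hrhs] at h
  have h2 := congrFun (congrFun h i) i'
  simpa only [Matrix.of_apply] using h2

end AuxExtract
/-- If a product of incoherent unitaries and `k` generalized controlled-Hadamards
on `n + m` qubits, acting on inputs together with a fixed ancilla `|γ⟩`, implements `H^{⊗n}`
exactly (after tracing out the ancilla qubits), then `n ≤ k`. -/
theorem k_hadamards_cannot_make_n (n m k : ℕ)
    (Us : Fin (k + 1) → Matrix ((Fin n ⊕ Fin m) → Fin 2) ((Fin n ⊕ Fin m) → Fin 2) ℂ)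
    (Vs : Fin k → Matrix ((Fin n ⊕ Fin m) → Fin 2) ((Fin n ⊕ Fin m) → Fin 2) ℂ)
    (hUs : ∀ i, IsIncoherent (Us i)) (hVs : ∀ i, IsCtrlHadamard (Vs i))
    (U : Matrix ((Fin n ⊕ Fin m) → Fin 2) ((Fin n ⊕ Fin m) → Fin 2) ℂ)
    (hU : U = altProd k Us Vs)
    (γ : (Fin m → Fin 2) → ℂ) (hγ : ∑ j, ‖γ j‖ ^ 2 = 1)
    (himpl : ∀ ρ : Matrix (Fin n → Fin 2) (Fin n → Fin 2) ℂ, IsState ρ →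
      (Matrix.of fun i i' : Fin n → Fin 2 => ∑ j : Fin m → Fin 2,
        (U * (Matrix.of fun a b : (Fin n ⊕ Fin m) → Fin 2 =>
            ρ (a ∘ Sum.inl) (b ∘ Sum.inl) *
              (γ (a ∘ Sum.inr) * (starRingEnd ℂ) (γ (b ∘ Sum.inr)))) * Uᴴ)
          (Sum.elim i j) (Sum.elim i' j)) = Hpow n * ρ * Hpow n) :
    n ≤ k := by
  rcases Nat.eq_zero_or_pos n with hn | hn
  · omega
  classical
  -- notation
  set s : ℂ := (((Real.sqrt 2)⁻¹ : ℝ) : ℂ) with hs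
  have hsne : s ≠ 0 := sqrt2_inv_ne
  have hsn : s ^ n ≠ 0 := pow_ne_zero n hsne
  set z0 : Fin n → Fin 2 := (fun _ => 0) with hz0
  set e0 : (Fin n → Fin 2) → ℂ := fun x => if x = z0 then 1 else 0 with he0
  set w : (Fin n → Fin 2) → ℂ := fun _ => s ^ n with hw
  have hv1 : Hpow n *ᵥ e0 = w := by rw [he0, hw, hs, hz0]; exact hpow_mulVec_e0 n
  have hv2 : Hpow n *ᵥ w = e0 := by rw [he0, hw, hs, hz0]; exact hpow_mulVec_w n
  have he0z0 : e0 z0 = 1 := by rw [he0]; simp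
  have hwval : ∀ i, w i = s ^ n := fun i => rfl
  -- unit norms
  have hunit_e0 : ∑ x, Complex.normSq (e0 x) = 1 := by
    rw [he0]
    simp [apply_ite Complex.normSq, Finset.sum_ite_eq']
  have hnormSq_s : Complex.normSq s = 2⁻¹ := by
    rw [hs, Complex.normSq_ofReal, ← mul_inv, Real.mul_self_sqrt (by norm_num : (0:ℝ) ≤ 2)]
  have hcard : Fintype.card (Fin n → Fin 2) = 2 ^ n := by simp
  have hunit_w : ∑ x, Complex.normSq (w x) = 1 := by
    rw [hw]
    rw [Finset.sum_const, Finset.card_univ, hcard, map_pow, hnormSq_s, nsmul_eq_mul]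
    push_cast
    rw [← mul_pow]
    norm_num
  -- the two product inputs
  set Φ1 : ((Fin n ⊕ Fin m) → Fin 2) → ℂ :=
    fun a => e0 (a ∘ Sum.inl) * γ (a ∘ Sum.inr) with hΦ1
  set Φ2 : ((Fin n ⊕ Fin m) → Fin 2) → ℂ :=
    fun a => w (a ∘ Sum.inl) * γ (a ∘ Sum.inr) with hΦ2
  -- extraction for e0
  have E1 := extract_lemma U γ himpl e0 hunit_e0
  rw [hv1] at E1
  have hwz0 : w z0 ≠ 0 := by rw [hwval z0]; exact hsn
  have hM1 := rank_one_factor (fun i j => (U *ᵥ Φ1) (Sum.elim i j)) w z0 hwz0 E1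
  obtain ⟨χ0, hM1'⟩ : ∃ χ0, ∀ i j, (U *ᵥ Φ1) (Sum.elim i j) = w i * χ0 j :=
    ⟨fun j => (U *ᵥ Φ1) (Sum.elim z0 j) / w z0, fun i j => hM1 i j⟩
  -- extraction for w
  have E2 := extract_lemma U γ himpl w hunit_w
  rw [hv2] at E2
  have he0z0ne : e0 z0 ≠ 0 := by rw [he0z0]; exact one_ne_zero
  have hM2 := rank_one_factor (fun i j => (U *ᵥ Φ2) (Sum.elim i j)) e0 z0 he0z0ne E2
  obtain ⟨χp, hM2'⟩ : ∃ χp, ∀ i j, (U *ᵥ Φ2) (Sum.elim i j) = e0 i * χp j :=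
    ⟨fun j => (U *ᵥ Φ2) (Sum.elim z0 j) / e0 z0, fun i j => hM2 i j⟩
  -- the superposition input
  set σv : (Fin n → Fin 2) → ℂ := fun x => e0 x + w x with hσ
  set N : ℝ := ∑ x, Complex.normSq (σv x) with hN
  set x1 : Fin n → Fin 2 := (fun _ => 1) with hx1def
  have hx1 : x1 ≠ z0 := by
    intro h
    have h10 : (1 : Fin 2) = 0 := by
      have := congrFun h ⟨0, hn⟩
      rw [hx1def, hz0] at this
      exact this
    exact absurd h10 (by decide)
  have he0x1 : e0 x1 = 0 := by rw [he0]; exact if_neg hx1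
  have hσx1 : σv x1 = s ^ n := by
    show e0 x1 + w x1 = s ^ n
    rw [he0x1, zero_add]
  have hNpos : 0 < N := by
    rw [hN]
    refine lt_of_lt_of_le ?_ (Finset.single_le_sum
      (fun x _ => Complex.normSq_nonneg (σv x)) (Finset.mem_univ x1))
    rw [hσx1]
    exact Complex.normSq_pos.mpr hsn
  set c : ℂ := (((Real.sqrt N)⁻¹ : ℝ) : ℂ) with hc
  have hcne : c ≠ 0 := by
    rw [hc]
    simp only [ne_eq, Complex.ofReal_eq_zero, inv_eq_zero]
    exact (Real.sqrt_pos.mpr hNpos).ne'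
  set ψ3 : (Fin n → Fin 2) → ℂ := fun x => c * (e0 x + w x) with hψ3
  have hunit3 : ∑ x, Complex.normSq (ψ3 x) = 1 := by
    rw [hψ3]
    simp only [Complex.normSq_mul]
    rw [← Finset.mul_sum]
    have h1 : Complex.normSq c = N⁻¹ := by
      rw [hc, Complex.normSq_ofReal, ← mul_inv, Real.mul_self_sqrt hNpos.le]
    have h2 : ∑ x, Complex.normSq (e0 x + w x) = N := by rw [hN]
    rw [h1, h2, inv_mul_cancel₀ hNpos.ne']
  have E3 := extract_lemma U γ himpl ψ3 hunit3
  have hψ3v : ψ3 = c • (e0 + w) := by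
    funext x
    rw [hψ3]
    simp [smul_eq_mul]
  have hv3 : Hpow n *ᵥ ψ3 = fun i => c * (w i + e0 i) := by
    rw [hψ3v, Matrix.mulVec_smul, Matrix.mulVec_add, hv1, hv2]
    funext i
    simp [smul_eq_mul]
  rw [hv3] at E3
  have hv3z0 : c * (w z0 + e0 z0) ≠ 0 := by
    rw [hwval z0, he0z0]
    apply mul_ne_zero hcne
    have : s ^ n = (((Real.sqrt 2)⁻¹ ^ n : ℝ) : ℂ) := by rw [hs]; push_cast; ring
    rw [this, ← Complex.ofReal_one, ← Complex.ofReal_add]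
    rw [ne_eq, Complex.ofReal_eq_zero]
    positivity
  have hM3 := rank_one_factor
    (fun i j => (U *ᵥ fun a => ψ3 (a ∘ Sum.inl) * γ (a ∘ Sum.inr)) (Sum.elim i j))
    (fun i => c * (w i + e0 i)) z0 hv3z0 E3
  obtain ⟨χ2, hM3'⟩ : ∃ χ2, ∀ i j,
      (U *ᵥ fun a => ψ3 (a ∘ Sum.inl) * γ (a ∘ Sum.inr)) (Sum.elim i j)
        = (c * (w i + e0 i)) * χ2 j :=
    ⟨fun j => (U *ᵥ fun a => ψ3 (a ∘ Sum.inl) * γ (a ∘ Sum.inr)) (Sum.elim z0 j)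
      / (c * (w z0 + e0 z0)), fun i j => hM3 i j⟩
  -- linearity
  have hΦ3 : (fun a : (Fin n ⊕ Fin m) → Fin 2 => ψ3 (a ∘ Sum.inl) * γ (a ∘ Sum.inr))
      = c • (Φ1 + Φ2) := by
    funext a
    rw [hψ3, hΦ1, hΦ2]
    simp [smul_eq_mul]
    ring
  have hM3lin : ∀ i j, (U *ᵥ fun a => ψ3 (a ∘ Sum.inl) * γ (a ∘ Sum.inr)) (Sum.elim i j)
      = c * ((U *ᵥ Φ1) (Sum.elim i j) + (U *ᵥ Φ2) (Sum.elim i j)) := by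
    intro i j
    rw [hΦ3, Matrix.mulVec_smul, Matrix.mulVec_add]
    simp [smul_eq_mul]
  have hkey : ∀ i j, w i * χ0 j + e0 i * χp j = (w i + e0 i) * χ2 j := by
    intro i j
    have h1 := (hM3lin i j).symm.trans (hM3' i j)
    rw [hM1' i j, hM2' i j] at h1
    have h2 : c * (w i * χ0 j + e0 i * χp j) = c * ((w i + e0 i) * χ2 j) := by
      rw [h1]; ring
    exact mul_left_cancel₀ hcne h2
  have hχ20 : ∀ j, χ2 j = χ0 j := by
    intro j
    have h := hkey x1 j
    rw [he0x1, hwval x1] at h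
    have h2 : s ^ n * χ0 j = s ^ n * χ2 j := by
      rw [zero_mul, add_zero, add_zero] at h
      exact h
    exact (mul_left_cancel₀ hsn h2).symm
  have hχp0 : ∀ j, χp j = χ0 j := by
    intro j
    have h := hkey z0 j
    rw [he0z0, hwval z0] at h
    have h2 := hχ20 j
    linear_combination h + (s ^ n + 1) * h2
  -- nonvanishing
  have hγne : ∃ j, γ j ≠ 0 := by
    by_contra h
    push_neg at h
    simp [h] at hγ
  have hχ0ne : ∃ j, χ0 j ≠ 0 := by
    have hsum := E1 z0 z0
    have hrhs : w z0 * (starRingEnd ℂ) (w z0) ≠ 0 :=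
      mul_ne_zero hwz0 (by simpa using hwz0)
    have hsumne : (∑ j : Fin m → Fin 2, (U *ᵥ Φ1) (Sum.elim z0 j)
        * (starRingEnd ℂ) ((U *ᵥ Φ1) (Sum.elim z0 j))) ≠ 0 := by
      rw [hsum]; exact hrhs
    obtain ⟨j0, _, hj0⟩ := Finset.exists_ne_zero_of_sum_ne_zero hsumne
    refine ⟨j0, ?_⟩
    have := left_ne_zero_of_mul hj0
    rw [hM1' z0 j0] at this
    exact right_ne_zero_of_mul this
  -- rank computations
  have heta : ∀ a : (Fin n ⊕ Fin m) → Fin 2,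
      Sum.elim (a ∘ Sum.inl) (a ∘ Sum.inr) = a := by
    intro a; funext x; cases x <;> rfl
  have hUΦ1 : (U *ᵥ Φ1) = fun a => w (a ∘ Sum.inl) * χ0 (a ∘ Sum.inr) := by
    funext a
    have := hM1' (a ∘ Sum.inl) (a ∘ Sum.inr)
    rw [heta a] at this
    exact this
  have hUΦ2 : (U *ᵥ Φ2) = fun a => e0 (a ∘ Sum.inl) * χ0 (a ∘ Sum.inr) := by
    funext a
    have := hM2' (a ∘ Sum.inl) (a ∘ Sum.inr)
    rw [heta a, hχp0] at this
    exact this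
  have hrank_e0 : cohRank e0 = 1 := by rw [he0]; exact cohRank_single z0
  have hrank_w : cohRank w = 2 ^ n := by
    rw [hw]
    rw [cohRank_const hsn, hcard]
  have hrankΦ1 : cohRank Φ1 = cohRank γ := by
    rw [hΦ1, cohRank_prod, hrank_e0, one_mul]
  have hrankΦ2 : cohRank Φ2 = 2 ^ n * cohRank γ := by
    rw [hΦ2, cohRank_prod, hrank_w]
  have hrankUΦ1 : cohRank (U *ᵥ Φ1) = 2 ^ n * cohRank χ0 := by
    rw [hUΦ1, cohRank_prod, hrank_w]
  have hrankUΦ2 : cohRank (U *ᵥ Φ2) = cohRank χ0 := by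
    rw [hUΦ2, cohRank_prod, hrank_e0, one_mul]
  -- chain bounds
  obtain ⟨C1, -⟩ := altProd_chain k Us Vs hUs hVs Φ1
  obtain ⟨-, C2⟩ := altProd_chain k Us Vs hUs hVs Φ2
  rw [← hU] at C1 C2
  rw [hrankUΦ1, hrankΦ1] at C1
  rw [hrankUΦ2, hrankΦ2] at C2
  -- conclude
  have hr : 1 ≤ cohRank γ := cohRank_pos hγne
  have hr' : 1 ≤ cohRank χ0 := cohRank_pos hχ0ne
  have hmul : (2 ^ n * 2 ^ n) * (cohRank γ * cohRank χ0)
      ≤ (2 ^ k * 2 ^ k) * (cohRank γ * cohRank χ0) := by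
    calc (2 ^ n * 2 ^ n) * (cohRank γ * cohRank χ0)
        = (2 ^ n * cohRank χ0) * (2 ^ n * cohRank γ) := by ring
      _ ≤ (2 ^ k * cohRank γ) * (2 ^ k * cohRank χ0) := Nat.mul_le_mul C1 C2
      _ = (2 ^ k * 2 ^ k) * (cohRank γ * cohRank χ0) := by ring
  have hpos : 0 < cohRank γ * cohRank χ0 := Nat.mul_pos hr hr'
  have h4 : 2 ^ n * 2 ^ n ≤ 2 ^ k * 2 ^ k := Nat.le_of_mul_le_mul_right hmul hpos
  have h5 : (2:ℕ) ^ (n + n) ≤ 2 ^ (k + k) := by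
    rw [pow_add, pow_add]; exact h4
  have h6 := (Nat.pow_le_pow_iff_right (by norm_num : 1 < 2)).mp h5
  omega
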